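/- Let a and b be two parallel vertical lines with a to the left of b, let P be a nonempty finite set of points strictly between a and b and Q a nonempty finite set of points strictly to the right of b, with P ∪ Q in general position. Then there exists a unique pair (p, q) with p ∈ P, q ∈ Q such that every point of (P ∪ Q) \ {p, q} lies strictly below the line through p and q. -/

import Mathlib

open Set

/-- A set of points is in general position if no three distinct points of it are
collinear. -/
def GenPos (S : Set (ℝ × ℝ)) : Prop :=
  ∀ p ∈ S, ∀ q ∈ S, ∀ r ∈ S, p ≠ q → p ≠ r → q ≠ r →
    ¬ Collinear ℝ ({p, q, r} : Set (ℝ × ℝ))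

/-- The line through two (distinct) points, as a set of points. -/
def lineThrough (a b : ℝ × ℝ) : Set (ℝ × ℝ) :=
  {x | Collinear ℝ ({a, b, x} : Set (ℝ × ℝ))}

/-!
The upper cap is the pair `(p, q) ∈ P × Q` whose connecting line crosses the vertical line
`x = b` highest. If some other point `z` were on or above that line, collinearity is excluded
by general position, and replacing `p` by `z` (if `z ∈ P`) or `q` by `z` (if `z ∈ Q`) would
give a higher crossing. Conversely, if every other point lies strictly below the line through
`p` and `q`, then every other pair crosses `x = b` strictly lower, since the crossing height of
the line through `p'` and `q'` is a convex combination of `p'.2` and `q'.2`.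
-/

namespace UpperCap

/-- Positive, zero or negative according as `z` lies above, on or below the line through `p`
and `q`, when `p.1 < q.1`. -/
def orient (p q z : ℝ × ℝ) : ℝ :=
  (q.1 - p.1) * (z.2 - p.2) - (q.2 - p.2) * (z.1 - p.1)

/-- The ordinate at which the line through `p` and `q` meets the vertical line `x = b`. -/
noncomputable def heightAt (b : ℝ) (p q : ℝ × ℝ) : ℝ :=
  (p.2 * (q.1 - b) + q.2 * (b - p.1)) / (q.1 - p.1)

lemma orient_self_left (p q : ℝ × ℝ) : orient p q p = 0 := by
  unfold orient; ring

lemma orient_self_right (p q : ℝ × ℝ) : orient p q q = 0 := by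
  unfold orient; ring

lemma orient_rotate (p q z : ℝ × ℝ) : orient z q p = -orient p q z := by
  unfold orient; ring

lemma orient_swap_right (p q z : ℝ × ℝ) : orient p z q = -orient p q z := by
  unfold orient; ring

lemma collinear_of_orient_eq_zero {p q z : ℝ × ℝ} (hpq : p.1 ≠ q.1)
    (h : orient p q z = 0) : Collinear ℝ ({p, q, z} : Set (ℝ × ℝ)) := by
  have hd : q.1 - p.1 ≠ 0 := sub_ne_zero.2 hpq.symm
  rw [collinear_iff_of_mem (mem_insert p _)]
  refine ⟨q - p, ?_⟩
  simp only [mem_insert_iff, mem_singleton_iff, forall_eq_or_imp, forall_eq]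
  refine ⟨⟨0, by simp⟩, ⟨1, by simp⟩, ⟨(z.1 - p.1) / (q.1 - p.1), ?_⟩⟩
  unfold orient at h
  ext
  · simp only [vadd_eq_add, Prod.fst_add, Prod.smul_fst, Prod.fst_sub, smul_eq_mul]
    field_simp
    ring
  · simp only [vadd_eq_add, Prod.snd_add, Prod.smul_snd, Prod.snd_sub, smul_eq_mul]
    field_simp
    linarith

lemma heightAt_sub_heightAt (b : ℝ) {p q p' q' : ℝ × ℝ} (hpq : p.1 ≠ q.1) (hpq' : p'.1 ≠ q'.1) :
    heightAt b p' q' - heightAt b p q =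
      ((q'.1 - b) * orient p q p' + (b - p'.1) * orient p q q') /
        ((q.1 - p.1) * (q'.1 - p'.1)) := by
  have hd : q.1 - p.1 ≠ 0 := sub_ne_zero.2 hpq.symm
  have hd' : q'.1 - p'.1 ≠ 0 := sub_ne_zero.2 hpq'.symm
  unfold heightAt orient
  field_simp
  ring

lemma heightAt_lt_heightAt {b : ℝ} {p q p' q' : ℝ × ℝ}
    (hp : p.1 < b) (hq : b < q.1) (hp' : p'.1 < b) (hq' : b < q'.1)
    (h₁ : orient p q p' ≤ 0) (h₂ : orient p q q' ≤ 0)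
    (hs : orient p q p' < 0 ∨ orient p q q' < 0) :
    heightAt b p' q' < heightAt b p q := by
  rw [← sub_neg, heightAt_sub_heightAt b (by linarith) (by linarith)]
  refine div_neg_of_neg_of_pos ?_ (by nlinarith)
  rcases hs with hs | hs
  · nlinarith [mul_nonpos_of_nonneg_of_nonpos (sub_nonneg.2 hp'.le) h₂]
  · nlinarith [mul_nonpos_of_nonneg_of_nonpos (sub_nonneg.2 hq'.le) h₁]

def IsUpperCap (S : Set (ℝ × ℝ)) (p q : ℝ × ℝ) : Prop :=
  ∀ z ∈ S, z ≠ p → z ≠ q → orient p q z < 0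

lemma IsUpperCap.orient_nonpos {S : Set (ℝ × ℝ)} {p q z : ℝ × ℝ} (h : IsUpperCap S p q)
    (hz : z ∈ S) : orient p q z ≤ 0 := by
  rcases eq_or_ne z p with rfl | hzp
  · exact (orient_self_left z q).le
  rcases eq_or_ne z q with rfl | hzq
  · exact (orient_self_right p z).le
  exact (h z hz hzp hzq).le

lemma IsUpperCap.heightAt_lt {S : Set (ℝ × ℝ)} {b : ℝ} {p q p' q' : ℝ × ℝ}
    (h : IsUpperCap S p q) (hp : p.1 < b) (hq : b < q.1) (hp' : p'.1 < b) (hq' : b < q'.1)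
    (hp'S : p' ∈ S) (hq'S : q' ∈ S) (hne : (p', q') ≠ (p, q)) :
    heightAt b p' q' < heightAt b p q := by
  have hp'q : p' ≠ q := by rintro rfl; linarith
  have hq'p : q' ≠ p := by rintro rfl; linarith
  refine heightAt_lt_heightAt hp hq hp' hq' (h.orient_nonpos hp'S)
    (h.orient_nonpos hq'S) ?_
  by_cases hpp : p' = p
  · exact Or.inr (h q' hq'S hq'p fun hqq => hne (by rw [hpp, hqq]))
  · exact Or.inl (h p' hp'S hpp hp'q)

lemma isUpperCap_of_forall_heightAt_le {P Q : Set (ℝ × ℝ)} {b : ℝ}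
    (hP : ∀ p ∈ P, p.1 < b) (hQ : ∀ q ∈ Q, b < q.1) (hgen : GenPos (P ∪ Q))
    {p q : ℝ × ℝ} (hp : p ∈ P) (hq : q ∈ Q)
    (hmax : ∀ p' ∈ P, ∀ q' ∈ Q, heightAt b p' q' ≤ heightAt b p q) :
    IsUpperCap (P ∪ Q) p q := by
  have hpb := hP p hp
  have hqb := hQ q hq
  have hpq : p ≠ q := by rintro rfl; linarith
  intro z hz hzp hzq
  by_contra! hge
  rcases hge.eq_or_lt with heq | hpos
  · exact hgen p (Or.inl hp) q (Or.inr hq) z hz hpq (Ne.symm hzp) (Ne.symm hzq)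
      (collinear_of_orient_eq_zero (by linarith) heq.symm)
  rcases hz with hzP | hzQ
  · have hzb := hP z hzP
    refine (hmax z hzP q hq).not_gt (heightAt_lt_heightAt hzb hqb hpb hqb ?_
      (orient_self_right z q).le (Or.inl ?_)) <;>
    · rw [orient_rotate]; linarith
  · have hzb := hQ z hzQ
    refine (hmax p hp z hzQ).not_gt (heightAt_lt_heightAt hpb hzb hpb hqb
      (orient_self_left p z).le ?_ (Or.inr ?_)) <;>
    · rw [orient_swap_right]; linarith

end UpperCap

open UpperCap in
theorem stmt9_general (a b : ℝ) (P Q : Finset (ℝ × ℝ))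
    (hPne : P.Nonempty) (hQne : Q.Nonempty)
    (hPx : ∀ p ∈ P, a < p.1 ∧ p.1 < b) (hQx : ∀ q ∈ Q, b < q.1)
    (hgen : GenPos (↑P ∪ ↑Q)) :
    ∃! pq : (ℝ × ℝ) × (ℝ × ℝ), pq.1 ∈ P ∧ pq.2 ∈ Q ∧
      ∀ z ∈ (↑P ∪ ↑Q : Set (ℝ × ℝ)), z ≠ pq.1 → z ≠ pq.2 →
        (pq.2.1 - pq.1.1) * (z.2 - pq.1.2) - (pq.2.2 - pq.1.2) * (z.1 - pq.1.1) < 0 := by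
  have hPb : ∀ p ∈ (P : Set (ℝ × ℝ)), p.1 < b := fun p hp => (hPx p hp).2
  obtain ⟨⟨p, q⟩, hpq, hmax⟩ :=
    (P ×ˢ Q).exists_max_image (fun pq => heightAt b pq.1 pq.2) (hPne.product hQne)
  obtain ⟨hp, hq⟩ := Finset.mem_product.1 hpq
  have hcap : IsUpperCap (↑P ∪ ↑Q) p q :=
    isUpperCap_of_forall_heightAt_le hPb hQx hgen hp hq
      fun p' hp' q' hq' => hmax (p', q') (Finset.mem_product.2 ⟨hp', hq'⟩)
  refine ⟨(p, q), ⟨hp, hq, hcap⟩, fun ⟨p', q'⟩ ⟨hp', hq', hcap'⟩ => ?_⟩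
  by_contra hne
  exact (hmax (p', q') (Finset.mem_product.2 ⟨hp', hq'⟩)).not_gt
    (IsUpperCap.heightAt_lt (S := ↑P ∪ ↑Q) hcap' (hPb p' hp') (hQx q' hq') (hPb p hp)
      (hQx q hq) (Or.inl hp) (Or.inr hq) (Ne.symm hne))

/-- existence and uniqueness of the "upper cap": given a nonempty finite set
`P` strictly between the vertical lines `x = a` and `x = b` and a nonempty finite set `Q`
strictly to the right of `x = b`, with `P ∪ Q` in general position, there is a unique
pair `(p, q) ∈ P × Q` such that every other point of `P ∪ Q` lies strictly below the
line through `p` and `q`. -/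
theorem stmt9 (a b : ℝ) (hab : a < b) (P Q : Finset (ℝ × ℝ))
    (hPne : P.Nonempty) (hQne : Q.Nonempty)
    (hPx : ∀ p ∈ P, a < p.1 ∧ p.1 < b) (hQx : ∀ q ∈ Q, b < q.1)
    (hgen : GenPos (↑P ∪ ↑Q)) :
    ∃! pq : (ℝ × ℝ) × (ℝ × ℝ), pq.1 ∈ P ∧ pq.2 ∈ Q ∧
      ∀ z ∈ (↑P ∪ ↑Q : Set (ℝ × ℝ)), z ≠ pq.1 → z ≠ pq.2 →
        (pq.2.1 - pq.1.1) * (z.2 - pq.1.2) - (pq.2.2 - pq.1.2) * (z.1 - pq.1.1) < 0 :=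
  stmt9_general a b P Q hPne hQne hPx hQx hgen
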